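/- arXiv:2303.09480 — 5 statements merged into one kernel-verified Lean document; each statement's English description precedes it below -/
import Mathlib

section
/- Let (X,J;Ω_R,ℋ_R) be a pseudo-holomorphic Hamiltonian system in the sense of Definition PHHS_2: (X,Ω_R) is symplectic, J is an Ω_R-anticompatible almost complex structure (Ω_R(J·,J·) = −Ω_R), ℋ_R: X → ℝ is smooth, and the 1-form Ω_R(J(X_{ℋ_R}),·) is exact with primitive ℋ_I, where ι_{X_{ℋ_R}}Ω_R = −dℋ_R. Then the complex function ℋ = ℋ_R + iℋ_I is pseudo-holomorphic, i.e. dℋ ∘ J = i·dℋ. -/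
/-- Exterior derivative of a 2-form on a vector space (chart model), evaluated on
constant vector fields. -/
noncomputable def extDeriv2 {E F : Type*} [NormedAddCommGroup E] [NormedSpace ℝ E]
    [NormedAddCommGroup F] [NormedSpace ℝ F]
    (ω : E → E → E → F) (p u v w : E) : F :=
  fderiv ℝ (fun q => ω q v w) p u - fderiv ℝ (fun q => ω q u w) p v
    + fderiv ℝ (fun q => ω q u v) p w

/-- For a pseudo-holomorphic Hamiltonian system `(X,J;Ω_R,H_R)`
(chart model): `Ω_R` symplectic (alternating, closed, non-degenerate), `J` an
`Ω_R`-anticompatible almost complex structure, `X` the Hamiltonian vector field of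
`H_R` (`ι_XΩ_R = -dH_R`), and `H_I` a primitive of the 1-form `Ω_R(J(X),·)`,
the function `H = H_R + iH_I` is pseudo-holomorphic: `dH ∘ J = i·dH`. -/
theorem stmt_5 {E : Type*} [NormedAddCommGroup E] [NormedSpace ℝ E]
    (J : E → E →L[ℝ] E) (hJ : ∀ x v, J x (J x v) = -v)
    (ΩR : E → E →L[ℝ] E →L[ℝ] ℝ)
    (hAlt : ∀ x v, ΩR x v v = 0)
    (hclosed : ∀ x u v w, extDeriv2 (fun p a b => ΩR p a b) x u v w = 0)
    (hnd : ∀ x (v : E), v ≠ 0 → ∃ w, ΩR x v w ≠ 0)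
    (hanti : ∀ x v w, ΩR x (J x v) (J x w) = -ΩR x v w)
    (HR HI : E → ℝ) (hHR : Differentiable ℝ HR) (hHI : Differentiable ℝ HI)
    (X : E → E)
    (hX : ∀ x w, ΩR x (X x) w = -fderiv ℝ HR x w)
    (hHI' : ∀ x w, fderiv ℝ HI x w = ΩR x (J x (X x)) w) :
    ∀ x w, fderiv ℝ (fun y => (HR y : ℂ) + HI y * Complex.I) x (J x w)
      = Complex.I * fderiv ℝ (fun y => (HR y : ℂ) + HI y * Complex.I) x w := by
  intro x w
  -- key identities
  have key2 : ∀ v, fderiv ℝ HI x (J x v) = fderiv ℝ HR x v := by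
    intro v
    rw [hHI', hanti, hX, neg_neg]
  have key1 : ∀ v, fderiv ℝ HI x v = -fderiv ℝ HR x (J x v) := by
    intro v
    have := key2 (J x v)
    rw [hJ, map_neg] at this
    linarith
  -- derivative of the complex function
  have hf : HasFDerivAt (fun y => (HR y : ℂ) + HI y * Complex.I)
      ((Complex.ofRealCLM.comp (fderiv ℝ HR x)) +
        Complex.I • Complex.ofRealCLM.comp (fderiv ℝ HI x)) x := by
    have h1 : HasFDerivAt (fun y => (HR y : ℂ))
        (Complex.ofRealCLM.comp (fderiv ℝ HR x)) x :=
      Complex.ofRealCLM.hasFDerivAt.comp x (hHR x).hasFDerivAt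
    have h2 : HasFDerivAt (fun y => (HI y : ℂ))
        (Complex.ofRealCLM.comp (fderiv ℝ HI x)) x :=
      Complex.ofRealCLM.hasFDerivAt.comp x (hHI x).hasFDerivAt
    exact h1.add (h2.mul_const Complex.I)
  rw [hf.fderiv]
  simp only [ContinuousLinearMap.add_apply, ContinuousLinearMap.coe_comp',
    Function.comp_apply, ContinuousLinearMap.smul_apply,
    Complex.ofRealCLM_apply, smul_eq_mul]
  rw [key1 w, key2 w]
  push_cast
  ring_nf
  rw [Complex.I_sq]
  ring
end

section
/- Let (X,J;Ω_R,ℋ_R) be a pseudo-holomorphic Hamiltonian system with ℋ_I a primitive of Ω_R(J(X_{ℋ_R}),·). Then the Poisson bracket {ℋ_R, ℋ_I} := Ω_R(X_{ℋ_R}, X_{ℋ_I}) vanishes identically, and hence the Hamiltonian vector fields X_{ℋ_R} and X_{ℋ_I} = −J(X_{ℋ_R}) commute: [X_{ℋ_R}, J(X_{ℋ_R})] = 0. -/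
/-- Lie bracket of vector fields on a vector space (chart model). -/
noncomputable def VB {E : Type*} [NormedAddCommGroup E] [NormedSpace ℝ E]
    (V W : E → E) : E → E := fun x => fderiv ℝ W x (V x) - fderiv ℝ V x (W x)

/-- For a pseudo-holomorphic Hamiltonian system `(X,J;Ω_R,H_R)` with
`H_I` a primitive of `Ω_R(J(X_{H_R}),·)`, the Poisson bracket
`{H_R,H_I} = Ω_R(X_{H_R}, X_{H_I})` vanishes identically, the Hamiltonian vector
field of `H_I` is `-J(X_{H_R})`, and `[X_{H_R}, J(X_{H_R})] = 0`. -/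
theorem stmt_6 {E : Type*} [NormedAddCommGroup E] [NormedSpace ℝ E]
    (J : E → E →L[ℝ] E) (hJs : ContDiff ℝ (⊤ : ℕ∞) J) (hJ : ∀ x v, J x (J x v) = -v)
    (ΩR : E → E →L[ℝ] E →L[ℝ] ℝ) (hΩs : ContDiff ℝ (⊤ : ℕ∞) ΩR)
    (hAlt : ∀ x v, ΩR x v v = 0)
    (hclosed : ∀ x u v w, extDeriv2 (fun p a b => ΩR p a b) x u v w = 0)
    (hnd : ∀ x (v : E), v ≠ 0 → ∃ w, ΩR x v w ≠ 0)
    (hanti : ∀ x v w, ΩR x (J x v) (J x w) = -ΩR x v w)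
    (HR HI : E → ℝ) (hHR : ContDiff ℝ (⊤ : ℕ∞) HR) (hHI : ContDiff ℝ (⊤ : ℕ∞) HI)
    (X : E → E) (hXs : ContDiff ℝ (⊤ : ℕ∞) X)
    (hX : ∀ x w, ΩR x (X x) w = -fderiv ℝ HR x w)
    (hHI' : ∀ x w, fderiv ℝ HI x w = ΩR x (J x (X x)) w)
    (XI : E → E)
    (hXI : ∀ x w, ΩR x (XI x) w = -fderiv ℝ HI x w) :
    (∀ x, ΩR x (X x) (XI x) = 0) ∧
    (∀ x, XI x = -(J x (X x))) ∧
    (∀ x, VB X (fun y => J y (X y)) x = 0) := by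
  set Y : E → E := fun y => J y (X y) with hYdef
  have skew : ∀ x v w, ΩR x v w = -ΩR x w v := by
    intro x v w
    have h := hAlt x (v + w)
    simp [map_add, ContinuousLinearMap.add_apply, hAlt x v, hAlt x w] at h
    linarith
  have nd : ∀ x (v : E), (∀ w, ΩR x v w = 0) → v = 0 := by
    intro x v hv
    by_contra h
    obtain ⟨w, hw⟩ := hnd x v h
    exact hw (hv w)
  have hXIeq : ∀ x, XI x = -(Y x) := by
    intro x
    have hz : ∀ w, ΩR x (XI x + Y x) w = 0 := by
      intro w
      have h1 := hXI x w
      have h2 := hHI' x w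
      simp only [map_add, ContinuousLinearMap.add_apply]
      show ΩR x (XI x) w + ΩR x (J x (X x)) w = 0
      linarith
    have h0 := nd x _ hz
    linear_combination (norm := abel) h0
  have hzero : ∀ y, ΩR y (X y) (Y y) = 0 := by
    intro y
    show ΩR y (X y) (J y (X y)) = 0
    have h1 := hanti y (X y) (J y (X y))
    rw [hJ y (X y)] at h1
    simp only [map_neg] at h1
    have h2 := skew y (J y (X y)) (X y)
    linarith
  have part1 : ∀ x, ΩR x (X x) (XI x) = 0 := by
    intro x
    rw [hXIeq x]
    simp only [map_neg]
    rw [hzero x]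
    simp
  refine ⟨part1, hXIeq, ?_⟩
  -- part 3
  have hYs : ContDiff ℝ (⊤ : ℕ∞) Y := hJs.clm_apply hXs
  have hΩd : ∀ p : E, HasFDerivAt ΩR (fderiv ℝ ΩR p) p := fun p =>
    (hΩs.differentiable (by simp) p).hasFDerivAt
  have hXd : ∀ p : E, HasFDerivAt X (fderiv ℝ X p) p := fun p =>
    (hXs.differentiable (by simp) p).hasFDerivAt
  have hYd : ∀ p : E, HasFDerivAt Y (fderiv ℝ Y p) p := fun p =>
    (hYs.differentiable (by simp) p).hasFDerivAt
  -- derivative of q ↦ ΩR q a b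
  have hfd_ab : ∀ (p a b : E), HasFDerivAt (fun q => ΩR q a b)
      (((fderiv ℝ ΩR p).flip a).flip b) p := by
    intro p a b
    have h2 := ((hΩd p).clm_apply (hasFDerivAt_const a p)).clm_apply (hasFDerivAt_const b p)
    refine h2.congr_fderiv ?_
    ext u
    simp
  have closed' : ∀ p u v w : E,
      fderiv ℝ ΩR p u v w - fderiv ℝ ΩR p v u w + fderiv ℝ ΩR p w u v = 0 := by
    intro p u v w
    have h := hclosed p u v w
    simp only [extDeriv2] at h
    rw [(hfd_ab p v w).fderiv, (hfd_ab p u w).fderiv, (hfd_ab p u v).fderiv] at h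
    simpa using h
  have skew' : ∀ p u a b : E, fderiv ℝ ΩR p u a b = -fderiv ℝ ΩR p u b a := by
    intro p u a b
    have h2 := (hfd_ab p a b).add (hfd_ab p b a)
    have h : ((fun q => ΩR q a b) + fun q => ΩR q b a) = fun _ => (0 : ℝ) :=
      funext fun q => by simp only [Pi.add_apply]; rw [skew q a b]; ring
    rw [h] at h2
    have h3 := h2.unique (hasFDerivAt_const 0 p)
    have h4 := congrArg (fun L : E →L[ℝ] ℝ => L u) h3
    simp at h4
    linarith
  have key : ∀ (Z : E → E) (G : E → ℝ), ContDiff ℝ (⊤ : ℕ∞) Z → ContDiff ℝ (⊤ : ℕ∞) G →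
      (∀ y w, ΩR y (Z y) w = fderiv ℝ G y w) →
      ∀ (p u w : E), fderiv ℝ ΩR p u (Z p) w + ΩR p (fderiv ℝ Z p u) w
        = fderiv ℝ ΩR p w (Z p) u + ΩR p (fderiv ℝ Z p w) u := by
    intro Z G hZs hGs hZG p u w
    have hZd : HasFDerivAt Z (fderiv ℝ Z p) p := (hZs.differentiable (by simp) p).hasFDerivAt
    have hD : HasFDerivAt (fun y => ΩR y (Z y))
        ((ΩR p).comp (fderiv ℝ Z p) + (fderiv ℝ ΩR p).flip (Z p)) p :=
      (hΩd p).clm_apply hZd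
    have heq : (fun y => ΩR y (Z y)) = fderiv ℝ G :=
      funext fun y => ContinuousLinearMap.ext fun w => hZG y w
    rw [heq] at hD
    have hsym := second_derivative_symmetric (f := G)
      (fun y => (hGs.differentiable (by simp) y).hasFDerivAt) hD u w
    simp only [ContinuousLinearMap.add_apply, ContinuousLinearMap.comp_apply,
      ContinuousLinearMap.flip_apply] at hsym
    linarith
  have hXG : ∀ y w, ΩR y (X y) w = fderiv ℝ (fun z => -HR z) y w := by
    intro y w
    rw [hX, fderiv_fun_neg]
    simp
  have hYG : ∀ y w, ΩR y (Y y) w = fderiv ℝ HI y w := by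
    intro y w
    rw [hHI' y w]
  have keyX := key X (fun z => -HR z) hXs hHR.neg hXG
  have keyY := key Y HI hYs hHI hYG
  have Fid : ∀ (p w : E), fderiv ℝ ΩR p w (X p) (Y p) + ΩR p (fderiv ℝ X p w) (Y p)
      + ΩR p (X p) (fderiv ℝ Y p w) = 0 := by
    intro p w
    have h1 := ((hΩd p).clm_apply (hXd p)).clm_apply (hYd p)
    have h0 : (fun y => ΩR y (X y) (Y y)) = fun _ => (0 : ℝ) := funext hzero
    rw [h0] at h1
    have h3 := h1.unique (hasFDerivAt_const 0 p)
    have h4 := congrArg (fun L : E →L[ℝ] ℝ => L w) h3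
    simp only [ContinuousLinearMap.add_apply, ContinuousLinearMap.comp_apply,
      ContinuousLinearMap.flip_apply, ContinuousLinearMap.zero_apply] at h4
    linarith
  intro x
  show fderiv ℝ Y x (X x) - fderiv ℝ X x (Y x) = 0
  apply nd x
  intro w
  simp only [map_sub, ContinuousLinearMap.sub_apply]
  have hA := keyX x (Y x) w
  have hB := keyY x (X x) w
  have hF := Fid x w
  have hc := closed' x (X x) (Y x) w
  have hs1 := skew' x w (Y x) (X x)
  have hs2 := skew x (fderiv ℝ Y x w) (X x)
  linarith
end

section
/- Consider on ℝ⁴ with coordinates (x₁,y₁,x₂,y₂) the symplectic form Ω_R = dx₂∧dx₁ − dy₂∧dy₁ and, for a smooth nowhere-vanishing function r: ℝ⁴ → ℝ, the almost complex structure J_r defined by J_r(∂x₁) = r∂y₁, J_r(∂x₂) = r^{-1}∂y₂, J_r(∂y₁) = −r^{-1}∂x₁, J_r(∂y₂) = −r∂x₂. Then J_r² = −1, Ω_R(J_r·,J_r·) = −Ω_R, the induced form Ω_I := −Ω_R(J_r·,·) equals r^{-1} dx₂∧dy₁ + r dy₂∧dx₁, and dΩ_I = dr ∧ (dy₂∧dx₁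 − r^{-2} dx₂∧dy₁). In particular, for r = e^{-x₁} one has dΩ_I = e^{x₁} dx₁∧dx₂∧dy₁ ≠ 0 everywhere, so J_r is nowhere integrable. -/
lemma aux_fd (r : (Fin 4 → ℝ) → ℝ) (hr : ContDiff ℝ (⊤ : ℕ∞) r) (hr0 : ∀ p, r p ≠ 0)
    (a b : ℝ) (p u : Fin 4 → ℝ) :
    fderiv ℝ (fun q => (r q)⁻¹ * a + r q * b) p u
      = fderiv ℝ r p u * (b - ((r p)⁻¹)^2 * a) := by
  have hd : HasFDerivAt r (fderiv ℝ r p) p :=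
    (hr.differentiable (by simp) p).hasFDerivAt
  have hinv : HasFDerivAt (fun q => (r q)⁻¹)
      ((-ContinuousLinearMap.mulLeftRight ℝ ℝ (r p)⁻¹ (r p)⁻¹).comp (fderiv ℝ r p)) p :=
    (hasFDerivAt_inv' (hr0 p)).comp p hd
  have h1 := (hinv.mul_const a).add (hd.mul_const b)
  rw [show (fun q => (r q)⁻¹ * a + r q * b) = ((fun y => (r y)⁻¹ * a) + fun y => r y * b) from rfl,
    h1.fderiv]
  simp only [ContinuousLinearMap.add_apply, ContinuousLinearMap.smul_apply,
    ContinuousLinearMap.coe_comp', Function.comp_apply, ContinuousLinearMap.neg_apply,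
    ContinuousLinearMap.mulLeftRight_apply, smul_eq_mul]
  field_simp
  ring

/-- On ℝ⁴ with coordinates `(x₁,y₁,x₂,y₂) = (p 0, p 1, p 2, p 3)`,
the symplectic form `Ω_R = dx₂∧dx₁ − dy₂∧dy₁` and the almost complex structure
`J_r` (for a smooth nowhere-vanishing `r`) given by `J_r ∂x₁ = r∂y₁`,
`J_r ∂x₂ = r⁻¹∂y₂`, `J_r ∂y₁ = −r⁻¹∂x₁`, `J_r ∂y₂ = −r∂x₂` satisfy `J_r² = −1`,
`Ω_R(J_r·,J_r·) = −Ω_R`, `Ω_I := −Ω_R(J_r·,·) = r⁻¹dx₂∧dy₁ + r dy₂∧dx₁`, and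
`dΩ_I = dr ∧ (dy₂∧dx₁ − r⁻²dx₂∧dy₁)`.  For `r = exp(−x₁)` one gets
`dΩ_I = exp(x₁) dx₁∧dx₂∧dy₁ ≠ 0` everywhere, so `J_r` is nowhere integrable. -/
theorem stmt_12 (r : (Fin 4 → ℝ) → ℝ) (hr : ContDiff ℝ (⊤ : ℕ∞) r) (hr0 : ∀ p, r p ≠ 0) :
    let ΩR : (Fin 4 → ℝ) → (Fin 4 → ℝ) → (Fin 4 → ℝ) → ℝ :=
      fun _ v w => (v 2 * w 0 - v 0 * w 2) - (v 3 * w 1 - v 1 * w 3)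
    let J : (Fin 4 → ℝ) → (Fin 4 → ℝ) → (Fin 4 → ℝ) :=
      fun p v => ![-(r p)⁻¹ * v 1, r p * v 0, -(r p) * v 3, (r p)⁻¹ * v 2]
    let ΩI : (Fin 4 → ℝ) → (Fin 4 → ℝ) → (Fin 4 → ℝ) → ℝ :=
      fun p v w => -ΩR p (J p v) w
    (∀ p v, J p (J p v) = -v) ∧
    (∀ p v w, ΩR p (J p v) (J p w) = -ΩR p v w) ∧
    (∀ p v w, ΩI p v w = (r p)⁻¹ * (v 2 * w 1 - v 1 * w 2)
        + r p * (v 3 * w 0 - v 0 * w 3)) ∧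
    (∀ p u v w, extDeriv2 ΩI p u v w =
        fderiv ℝ r p u * ((v 3 * w 0 - v 0 * w 3) - ((r p)⁻¹)^2 * (v 2 * w 1 - v 1 * w 2))
      - fderiv ℝ r p v * ((u 3 * w 0 - u 0 * w 3) - ((r p)⁻¹)^2 * (u 2 * w 1 - u 1 * w 2))
      + fderiv ℝ r p w * ((u 3 * v 0 - u 0 * v 3) - ((r p)⁻¹)^2 * (u 2 * v 1 - u 1 * v 2))) ∧
    ((∀ p, r p = Real.exp (-(p 0))) →
      (∀ p u v w, extDeriv2 ΩI p u v w = Real.exp (p 0) *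
        (u 0 * (v 2 * w 1 - w 2 * v 1) - v 0 * (u 2 * w 1 - w 2 * u 1)
          + w 0 * (u 2 * v 1 - v 2 * u 1))) ∧
      (∀ p, ∃ u v w, extDeriv2 ΩI p u v w ≠ 0)) := by
  intro ΩR J ΩI
  have h1 : ∀ p v, J p (J p v) = -v := by
    intro p v
    funext i
    fin_cases i <;>
      simp [J, Matrix.cons_val_zero, Matrix.cons_val_one, Matrix.head_cons] <;>
      field_simp [hr0 p]
  have h2 : ∀ p v w, ΩR p (J p v) (J p w) = -ΩR p v w := by
    intro p v w
    simp only [ΩR, J, Matrix.cons_val_zero, Matrix.cons_val_one, Matrix.head_cons,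
      Matrix.cons_val_two, Matrix.tail_cons, Matrix.cons_val_three]
    field_simp [hr0 p]
    ring
  have h3 : ∀ p v w, ΩI p v w = (r p)⁻¹ * (v 2 * w 1 - v 1 * w 2)
      + r p * (v 3 * w 0 - v 0 * w 3) := by
    intro p v w
    simp only [ΩI, ΩR, J, Matrix.cons_val_zero, Matrix.cons_val_one, Matrix.head_cons,
      Matrix.cons_val_two, Matrix.tail_cons, Matrix.cons_val_three]
    ring
  have h4 : ∀ p u v w, extDeriv2 ΩI p u v w =
        fderiv ℝ r p u * ((v 3 * w 0 - v 0 * w 3) - ((r p)⁻¹)^2 * (v 2 * w 1 - v 1 * w 2))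
      - fderiv ℝ r p v * ((u 3 * w 0 - u 0 * w 3) - ((r p)⁻¹)^2 * (u 2 * w 1 - u 1 * w 2))
      + fderiv ℝ r p w * ((u 3 * v 0 - u 0 * v 3) - ((r p)⁻¹)^2 * (u 2 * v 1 - u 1 * v 2)) := by
    intro p u v w
    have key : ∀ a b : Fin 4 → ℝ, (fun q => ΩI q a b)
        = fun q => (r q)⁻¹ * (a 2 * b 1 - a 1 * b 2) + r q * (a 3 * b 0 - a 0 * b 3) :=
      fun a b => funext fun q => h3 q a b
    unfold extDeriv2
    rw [key v w, key u w, key u v, aux_fd r hr hr0, aux_fd r hr hr0, aux_fd r hr hr0]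
  refine ⟨h1, h2, h3, h4, fun hre => ?_⟩
  have hfd : ∀ p u, fderiv ℝ r p u = -(Real.exp (-(p 0)) * u 0) := by
    intro p u
    have hrfun : r = fun p => Real.exp (-(p 0)) := funext hre
    have hproj : HasFDerivAt (fun p : Fin 4 → ℝ => -(p 0))
        (-(ContinuousLinearMap.proj 0 : (Fin 4 → ℝ) →L[ℝ] ℝ)) p :=
      (ContinuousLinearMap.proj (0 : Fin 4) : (Fin 4 → ℝ) →L[ℝ] ℝ).hasFDerivAt.neg
    have hexp := hproj.exp
    rw [hrfun, hexp.fderiv]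
    simp [mul_comm]
  have h5 : ∀ p u v w, extDeriv2 ΩI p u v w = Real.exp (p 0) *
        (u 0 * (v 2 * w 1 - w 2 * v 1) - v 0 * (u 2 * w 1 - w 2 * u 1)
          + w 0 * (u 2 * v 1 - v 2 * u 1)) := by
    intro p u v w
    rw [h4, hfd, hfd, hfd, hre p]
    rw [Real.exp_neg, inv_inv]
    have hne : Real.exp (p 0) ≠ 0 := Real.exp_ne_zero _
    field_simp
    ring
  refine ⟨h5, fun p => ?_⟩
  refine ⟨![1,0,0,0], ![0,0,1,0], ![0,1,0,0], ?_⟩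
  rw [h5]
  simp [Real.exp_ne_zero]
end

section
/- Let (X,J;Ω_R,ℋ_R) be a pseudo-holomorphic Hamiltonian system with Ω_I = −Ω_R(J·,·) and Hamiltonian vector field X_{ℋ_R}. Then X_{ℋ_R} is J-preserving (L_{X_{ℋ_R}}J = 0) if and only if ι_{X_{ℋ_R}} dΩ_I = 0; similarly J(X_{ℋ_R}) is J-preserving if and only if ι_{J(X_{ℋ_R})} dΩ_I = 0. -/
section helpers
variable {E F G : Type*} [NormedAddCommGroup E] [NormedSpace ℝ E]
  [NormedAddCommGroup F] [NormedSpace ℝ F] [NormedAddCommGroup G] [NormedSpace ℝ G]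

lemma fd_app {c : E → F →L[ℝ] G} {u : E → F} {x : E}
    (hc : DifferentiableAt ℝ c x) (hu : DifferentiableAt ℝ u x) (v : E) :
    fderiv ℝ (fun q => c q (u q)) x v
      = fderiv ℝ c x v (u x) + c x (fderiv ℝ u x v) := by
  rw [fderiv_clm_apply hc hu]
  simp [add_comm]

lemma fd_bilin {C : E → E →L[ℝ] E →L[ℝ] ℝ} {a b : E → E} {x : E}
    (hC : DifferentiableAt ℝ C x) (ha : DifferentiableAt ℝ a x)
    (hb : DifferentiableAt ℝ b x) (u : E) :
    fderiv ℝ (fun q => C q (a q) (b q)) x u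
      = fderiv ℝ C x u (a x) (b x) + C x (fderiv ℝ a x u) (b x)
        + C x (a x) (fderiv ℝ b x u) := by
  have h1 : DifferentiableAt ℝ (fun q => C q (a q)) x := hC.clm_apply ha
  rw [fd_app h1 hb u, fd_app hC ha u]
  simp [add_assoc]

lemma key {E : Type*} [NormedAddCommGroup E] [NormedSpace ℝ E]
    (J : E → E →L[ℝ] E) (hJs : ContDiff ℝ (⊤ : ℕ∞) J) (hJ : ∀ x v, J x (J x v) = -v)
    (ΩR : E → E →L[ℝ] E →L[ℝ] ℝ) (hΩs : ContDiff ℝ (⊤ : ℕ∞) ΩR)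
    (hclosed : ∀ x u v w, extDeriv2 (fun p a b => ΩR p a b) x u v w = 0)
    (hnd : ∀ x (v : E), v ≠ 0 → ∃ w, ΩR x v w ≠ 0)
    (hanti : ∀ x v w, ΩR x (J x v) (J x w) = -ΩR x v w)
    (V : E → E) (hV : ContDiff ℝ (⊤ : ℕ∞) V)
    (F : E → ℝ) (hF : ContDiff ℝ (⊤ : ℕ∞) F)
    (hFd : ∀ x w, ΩR x (V x) w = fderiv ℝ F x w)
    (G : E → ℝ) (hG : ContDiff ℝ (⊤ : ℕ∞) G)
    (hGd : ∀ x w, -(ΩR x (J x (V x)) w) = fderiv ℝ G x w) :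
    (∀ W : E → E, ContDiff ℝ (⊤ : ℕ∞) W →
        ∀ x, VB V (fun y => J y (W y)) x = J x (VB V W x))
      ↔ (∀ x v w, extDeriv2 (fun p a b => -(ΩR p (J p a) b)) x (V x) v w = 0) := by
  -- differentiability basics
  have dΩ : Differentiable ℝ ΩR := hΩs.differentiable (by simp)
  have dJ : Differentiable ℝ J := hJs.differentiable (by simp)
  have dV : Differentiable ℝ V := hV.differentiable (by simp)
  have dJc : ∀ a : E, Differentiable ℝ (fun q => J q a) :=
    fun a => (hJs.clm_apply contDiff_const).differentiable (by simp)
  have dJV : Differentiable ℝ (fun q => J q (V q)) :=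
    (hJs.clm_apply hV).differentiable (by simp)
  -- fderiv of ΩR with constant slots
  have fdc : ∀ (x u a b : E), fderiv ℝ (fun q => ΩR q a b) x u = fderiv ℝ ΩR x u a b := by
    intro x u a b
    rw [fd_bilin (dΩ x) (differentiableAt_const a) (differentiableAt_const b) u]
    simp
  -- fderiv of q ↦ ΩR q (J q a) b  (a, b constants)
  have fdJc : ∀ (x u a b : E), fderiv ℝ (fun q => ΩR q (J q a) b) x u
      = fderiv ℝ ΩR x u (J x a) b + ΩR x (fderiv ℝ J x u a) b := by
    intro x u a b
    rw [fd_bilin (dΩ x) ((dJc a) x) (differentiableAt_const b) u]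
    rw [fd_app (dJ x) (differentiableAt_const a) u]
    simp
  -- closedness, scalar form
  have hC1 : ∀ x u v w : E, fderiv ℝ ΩR x u v w - fderiv ℝ ΩR x v u w
      + fderiv ℝ ΩR x w u v = 0 := by
    intro x u v w
    have h := hclosed x u v w
    simpa [extDeriv2, fdc] using h
  -- symmetry from exactness of ι_V ΩR
  have hSymF : ∀ x v w : E, fderiv ℝ ΩR x v (V x) w + ΩR x (fderiv ℝ V x v) w
      = fderiv ℝ ΩR x w (V x) v + ΩR x (fderiv ℝ V x w) v := by
    intro x v w
    have dF' : Differentiable ℝ (fderiv ℝ F) := (hF.fderiv_right (m := (⊤ : ℕ∞)) (by simp)).differentiable (by simp)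
    have hsym : ∀ a b : E, fderiv ℝ (fderiv ℝ F) x a b = fderiv ℝ (fderiv ℝ F) x b a :=
      second_derivative_symmetric (fun y => ((hF.differentiable (by simp)) y).hasFDerivAt)
        ((dF' x).hasFDerivAt)
    have e : ∀ a c : E, fderiv ℝ ΩR x a (V x) c + ΩR x (fderiv ℝ V x a) c
        = fderiv ℝ (fderiv ℝ F) x a c := by
      intro a c
      have hfun : (fun q => ΩR q (V q) c) = fun q => fderiv ℝ F q c :=
        funext fun q => hFd q c
      have h1 : fderiv ℝ (fun q => ΩR q (V q) c) x a
          = fderiv ℝ ΩR x a (V x) c + ΩR x (fderiv ℝ V x a) c := by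
        rw [fd_bilin (dΩ x) (dV x) (differentiableAt_const c) a]; simp
      have h2 : fderiv ℝ (fun q => fderiv ℝ F q c) x a
          = fderiv ℝ (fderiv ℝ F) x a c := by
        rw [fd_app (dF' x) (differentiableAt_const c) a]; simp
      rw [← h1, hfun, h2]
    rw [e v w, e w v]; exact hsym v w
  -- symmetry from exactness of ι_V ΩI
  have hSymG : ∀ x v w : E,
      fderiv ℝ ΩR x v (J x (V x)) w + ΩR x (fderiv ℝ J x v (V x)) w
        + ΩR x (J x (fderiv ℝ V x v)) w
      = fderiv ℝ ΩR x w (J x (V x)) v + ΩR x (fderiv ℝ J x w (V x)) v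
        + ΩR x (J x (fderiv ℝ V x w)) v := by
    intro x v w
    have dG' : Differentiable ℝ (fderiv ℝ G) := (hG.fderiv_right (m := (⊤ : ℕ∞)) (by simp)).differentiable (by simp)
    have hsym : ∀ a b : E, fderiv ℝ (fderiv ℝ G) x a b = fderiv ℝ (fderiv ℝ G) x b a :=
      second_derivative_symmetric (fun y => ((hG.differentiable (by simp)) y).hasFDerivAt)
        ((dG' x).hasFDerivAt)
    have e : ∀ a c : E,
        -(fderiv ℝ ΩR x a (J x (V x)) c + ΩR x (fderiv ℝ J x a (V x)) c
          + ΩR x (J x (fderiv ℝ V x a)) c)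
        = fderiv ℝ (fderiv ℝ G) x a c := by
      intro a c
      have hfun : (fun q => -(ΩR q (J q (V q)) c)) = fun q => fderiv ℝ G q c :=
        funext fun q => hGd q c
      have h1 : fderiv ℝ (fun q => -(ΩR q (J q (V q)) c)) x a
          = -(fderiv ℝ ΩR x a (J x (V x)) c + ΩR x (fderiv ℝ J x a (V x)) c
            + ΩR x (J x (fderiv ℝ V x a)) c) := by
        have : fderiv ℝ (fun q => -(ΩR q (J q (V q)) c)) x
            = -fderiv ℝ (fun q => ΩR q (J q (V q)) c) x := fderiv_neg
        rw [this]
        simp only [ContinuousLinearMap.neg_apply, neg_inj]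
        rw [fd_bilin (dΩ x) (dJV x) (differentiableAt_const c) a]
        rw [fd_app (dJ x) (dV x) a]
        simp [add_assoc]
      have h2 : fderiv ℝ (fun q => fderiv ℝ G q c) x a
          = fderiv ℝ (fderiv ℝ G) x a c := by
        rw [fd_app (dG' x) (differentiableAt_const c) a]; simp
      rw [← h1, hfun, h2]
    have := (e v w).trans ((hsym v w).trans (e w v).symm)
    exact neg_inj.mp this
  -- swap identity
  have hswap : ∀ x a b : E, ΩR x (J x a) b = ΩR x a (J x b) := by
    intro x a b
    have h := hanti x a (J x b)
    rw [hJ x b] at h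
    simpa using h
  -- the J-preservation defect tensor
  set A : E → E → E := fun x v =>
    fderiv ℝ J x (V x) v + J x (fderiv ℝ V x v) - fderiv ℝ V x (J x v) with hA
  -- main identity : ι_V dΩI = -ΩR(A ·, ·)
  have hMain : ∀ x v w : E,
      extDeriv2 (fun p a b => -(ΩR p (J p a) b)) x (V x) v w = -(ΩR x (A x v) w) := by
    intro x v w
    have hT : ∀ (u a b : E), fderiv ℝ (fun q => -(ΩR q (J q a) b)) x u
        = -(fderiv ℝ ΩR x u (J x a) b + ΩR x (fderiv ℝ J x u a) b) := by
      intro u a b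
      have : fderiv ℝ (fun q => -(ΩR q (J q a) b)) x
          = -fderiv ℝ (fun q => ΩR q (J q a) b) x := fderiv_neg
      rw [this, ContinuousLinearMap.neg_apply, fdJc x u a b]
    have h1 := hC1 x (V x) (J x v) w
    have h2 := hSymF x (J x v) w
    have h3 := hSymG x v w
    have h4 := hswap x (fderiv ℝ V x w) v
    simp only [extDeriv2, hT, hA, map_add, map_sub, ContinuousLinearMap.add_apply,
      ContinuousLinearMap.sub_apply]
    linear_combination -h1 - h2 + h3 + h4
  -- bracket defect identity
  have hBr : ∀ (W : E → E), ContDiff ℝ (⊤ : ℕ∞) W → ∀ x,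
      VB V (fun y => J y (W y)) x - J x (VB V W x) = A x (W x) := by
    intro W hW x
    have dW : Differentiable ℝ W := hW.differentiable (by simp)
    have h1 : fderiv ℝ (fun y => J y (W y)) x (V x)
        = fderiv ℝ J x (V x) (W x) + J x (fderiv ℝ W x (V x)) :=
      fd_app (dJ x) (dW x) (V x)
    simp only [VB, h1, hA, map_sub]
    abel
  constructor
  · intro h x v w
    have hA0 : A x v = 0 := by
      have hb := hBr (fun _ => v) contDiff_const x
      rw [h (fun _ => v) contDiff_const x] at hb
      simpa using hb.symm
    rw [hMain x v w, hA0]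
    simp
  · intro h W hW x
    have hA0 : A x (W x) = 0 := by
      by_contra h0
      obtain ⟨w, hw⟩ := hnd x _ h0
      apply hw
      have := h x (W x) w
      rw [hMain x (W x) w] at this
      linarith [this]
    have hb := hBr W hW x
    rw [hA0] at hb
    exact sub_eq_zero.mp hb

end helpers

/-- For a pseudo-holomorphic Hamiltonian system `(X,J;Ω_R,H_R)` with
`Ω_I = -Ω_R(J·,·)` and Hamiltonian vector field `X_{H_R}`: the field `X_{H_R}` is
`J`-preserving (i.e. `[X_{H_R},J(W)] = J([X_{H_R},W])` for all vector fields `W`)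
iff `ι_{X_{H_R}}dΩ_I = 0`, and similarly `J(X_{H_R})` is `J`-preserving iff
`ι_{J(X_{H_R})}dΩ_I = 0`. -/
theorem stmt_13 {E : Type*} [NormedAddCommGroup E] [NormedSpace ℝ E]
    (J : E → E →L[ℝ] E) (hJs : ContDiff ℝ (⊤ : ℕ∞) J) (hJ : ∀ x v, J x (J x v) = -v)
    (ΩR : E → E →L[ℝ] E →L[ℝ] ℝ) (hΩs : ContDiff ℝ (⊤ : ℕ∞) ΩR)
    (hAlt : ∀ x v, ΩR x v v = 0)
    (hclosed : ∀ x u v w, extDeriv2 (fun p a b => ΩR p a b) x u v w = 0)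
    (hnd : ∀ x (v : E), v ≠ 0 → ∃ w, ΩR x v w ≠ 0)
    (hanti : ∀ x v w, ΩR x (J x v) (J x w) = -ΩR x v w)
    (HR : E → ℝ) (hHR : ContDiff ℝ (⊤ : ℕ∞) HR)
    (X : E → E) (hXs : ContDiff ℝ (⊤ : ℕ∞) X)
    (hX : ∀ x w, ΩR x (X x) w = -fderiv ℝ HR x w)
    (HI : E → ℝ) (hHI : ContDiff ℝ (⊤ : ℕ∞) HI)
    (hHI' : ∀ x w, fderiv ℝ HI x w = ΩR x (J x (X x)) w) :
    ((∀ W : E → E, ContDiff ℝ (⊤ : ℕ∞) W →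
        ∀ x, VB X (fun y => J y (W y)) x = J x (VB X W x))
      ↔ (∀ x v w, extDeriv2 (fun p a b => -(ΩR p (J p a) b)) x (X x) v w = 0)) ∧
    ((∀ W : E → E, ContDiff ℝ (⊤ : ℕ∞) W →
        ∀ x, VB (fun y => J y (X y)) (fun y => J y (W y)) x
          = J x (VB (fun y => J y (X y)) W x))
      ↔ (∀ x v w, extDeriv2 (fun p a b => -(ΩR p (J p a) b)) x (J x (X x)) v w = 0)) := by
  constructor
  · exact key J hJs hJ ΩR hΩs hclosed hnd hanti X hXs
      (fun x => -HR x) hHR.neg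
      (by intro x w; rw [hX x w, fderiv_fun_neg]; simp)
      (fun x => -HI x) hHI.neg
      (by intro x w; rw [← hHI' x w, fderiv_fun_neg]; simp)
  · exact key J hJs hJ ΩR hΩs hclosed hnd hanti (fun y => J y (X y)) (hJs.clm_apply hXs)
      HI hHI (fun x w => (hHI' x w).symm)
      (fun x => -HR x) hHR.neg
      (by intro x w
          rw [fderiv_fun_neg]
          simp only [ContinuousLinearMap.neg_apply, ← hX x w, hJ]
          simp)
end

section
/- On the punctured plane, consider the ODE Q''(z) = −1/(4Q(z)³) for a holomorphic function Q with initial data Q(0) = Q₀ ≠ 0, Q'(0) = P₀. Then locally Q(z) = √(Q₀² + 2Q₀P₀·z + 2E₀·z²) with E₀ = P₀²/2 − 1/(8Q₀²), where the square root is the holomorphic branch with √(Q₀²) = Q₀. In particular, for Q₀ = 1, P₀ = 1/2 one gets E₀ = 0 and Q(z) = √(z+1), and the two maximal holomorphic extensions of this solution to the plane slit along {Re(z+1) ≤ 0, Im(z+1)=0} and along {Im(z+1) ≤ 0, Re(z+1)=0} respectively have different domains and disagree (by a sign) on the third quadrant {Re(z+1)<0, Im(z+1)<0}, showing maximal holomorphic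 trajectories with the same initial value need not be unique. -/
/-!
If `Q` is differentiable and `Q² = c₀ + c₁ z + c₂ z²`, then `2 Q Q' = c₁ + 2 c₂ z` and hence
`Q'' = -(c₁² - 4 c₂ c₀) / (4 Q³)`. For `Q² = Q₀² + 2 Q₀ P₀ z + 2 E₀ z²` this discriminant is `1`
precisely because `E₀` is the energy of the initial data, and a solution near `0` is
`Q₀ √((Q₀² + 2 Q₀ P₀ z + 2 E₀ z²) / Q₀²)`. For `Q² = z + 1` any holomorphic branch of `√(z + 1)`
is a trajectory; the principal branch and the one cut along the negative imaginary axis have the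
same square on the third quadrant, where their real parts have opposite signs.
-/

open Complex Filter Topology
open scoped Real

section SquareOfQuadratic

variable {U : Set ℂ} {Q : ℂ → ℂ} {c₀ c₁ c₂ : ℂ}

theorem hasDerivAt_quadratic (z : ℂ) :
    HasDerivAt (fun w => c₀ + c₁ * w + c₂ * w ^ 2) (c₁ + 2 * c₂ * z) z := by
  refine ((((hasDerivAt_id z).const_mul c₁).const_add c₀).fun_add
    ((hasDerivAt_pow 2 z).const_mul c₂)).congr_deriv ?_
  norm_num
  ring

theorem deriv_eq_div_of_sq_eq_quadratic (hU : IsOpen U) (hQ : DifferentiableOn ℂ Q U)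
    (hsq : ∀ w ∈ U, Q w ^ 2 = c₀ + c₁ * w + c₂ * w ^ 2) {z : ℂ} (hz : z ∈ U) (hQz : Q z ≠ 0) :
    deriv Q z = (c₁ + 2 * c₂ * z) / (2 * Q z) := by
  have hQ' := (hQ.differentiableAt (hU.mem_nhds hz)).hasDerivAt
  have h₁ : HasDerivAt (fun w => Q w ^ 2) (2 * Q z * deriv Q z) z := by
    simpa using hQ'.fun_pow 2
  have h₂ : HasDerivAt (fun w => Q w ^ 2) (c₁ + 2 * c₂ * z) z :=
    (hasDerivAt_quadratic z).congr_of_eventuallyEq (eventually_of_mem (hU.mem_nhds hz) hsq)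
  rw [eq_div_iff (mul_ne_zero two_ne_zero hQz), ← h₁.unique h₂]
  ring

-- With `p = Q²`, differentiating `Q' = p' / (2Q)` gives `Q'' = (4 c₂ p - p'²) / (4 Q³)`.
theorem deriv_deriv_eq_of_sq_eq_quadratic (hU : IsOpen U) (hQ : DifferentiableOn ℂ Q U)
    (hQ₀ : ∀ w ∈ U, Q w ≠ 0) (hsq : ∀ w ∈ U, Q w ^ 2 = c₀ + c₁ * w + c₂ * w ^ 2)
    (hdisc : c₁ ^ 2 - 4 * c₂ * c₀ = 1) {z : ℂ} (hz : z ∈ U) :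
    deriv (deriv Q) z = -1 / (4 * Q z ^ 3) := by
  have hQ' := (hQ.differentiableAt (hU.mem_nhds hz)).hasDerivAt
  have hderiv : deriv Q =ᶠ[𝓝 z] fun w => (c₁ + 2 * c₂ * w) / (2 * Q w) :=
    eventually_of_mem (hU.mem_nhds hz) fun w hw =>
      deriv_eq_div_of_sq_eq_quadratic hU hQ hsq hw (hQ₀ w hw)
  have hnum : HasDerivAt (fun w => c₁ + 2 * c₂ * w) (2 * c₂) z := by
    simpa using ((hasDerivAt_id z).const_mul (2 * c₂)).const_add c₁
  have hQz := hQ₀ z hz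
  rw [hderiv.deriv_eq, (hnum.fun_div (hQ'.const_mul 2) (mul_ne_zero two_ne_zero hQz)).deriv,
    deriv_eq_div_of_sq_eq_quadratic hU hQ hsq hz hQz]
  field_simp
  linear_combination (16 * c₂) * hsq z hz - 4 * hdisc

end SquareOfQuadratic

theorem cpow_one_div_two_sq (w : ℂ) : (w ^ (1 / 2 : ℂ)) ^ 2 = w := by
  rw [one_div]
  exact cpow_ofNat_inv_pow w 2

theorem differentiableOn_cpow_one_div_two : DifferentiableOn ℂ (· ^ (1 / 2 : ℂ)) slitPlane :=
  fun _ hw => (differentiableAt_id.cpow_const hw).differentiableWithinAt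

theorem re_cpow_one_div_two_nonneg (w : ℂ) : 0 ≤ (w ^ (1 / 2 : ℂ)).re := by
  rw [one_div, cpow_inv_two_re]
  exact Real.sqrt_nonneg _

-- The factor `exp (π i / 4)` normalizes the branch to `1 ↦ 1`.
noncomputable def sqrtSlitNegImag (w : ℂ) : ℂ :=
  cexp (↑(π / 4) * I) * (-I * w) ^ (1 / 2 : ℂ)

theorem sqrtSlitNegImag_sq (w : ℂ) : sqrtSlitNegImag w ^ 2 = w := by
  have hI : cexp (↑(π / 4) * I) ^ 2 = I := by
    rw [← exp_nat_mul]
    convert exp_pi_div_two_mul_I using 2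
    push_cast
    ring
  rw [sqrtSlitNegImag, mul_pow, hI, cpow_one_div_two_sq, ← mul_assoc, mul_neg, I_mul_I, neg_neg,
    one_mul]

theorem sqrtSlitNegImag_one : sqrtSlitNegImag 1 = 1 := by
  rw [sqrtSlitNegImag, mul_one, cpow_def_of_ne_zero (neg_ne_zero.mpr I_ne_zero), log_neg_I,
    ← exp_add]
  convert exp_zero using 2
  push_cast
  ring

theorem neg_I_mul_mem_slitPlane_iff {w : ℂ} : -I * w ∈ slitPlane ↔ w.re ≠ 0 ∨ 0 < w.im := by
  have hre : (-I * w).re = w.im := by simp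
  have him : (-I * w).im = -w.re := by simp
  rw [mem_slitPlane_iff, hre, him, neg_ne_zero, or_comm]

theorem differentiableOn_sqrtSlitNegImag :
    DifferentiableOn ℂ sqrtSlitNegImag ((-I * ·) ⁻¹' slitPlane) := fun _ hw =>
  (((differentiableAt_id.const_mul (-I)).cpow_const hw).const_mul _).differentiableWithinAt

theorem re_sqrtSlitNegImag_neg {w : ℂ} (hre : w.re < 0) (him : w.im < 0) :
    (sqrtSlitNegImag w).re < 0 := by
  set x := -I * w
  have hxre : x.re = w.im := by simp [x]
  have hxim : x.im = -w.re := by simp [x]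
  have hlt : (x ^ (1 / 2 : ℂ)).re < (x ^ (1 / 2 : ℂ)).im := by
    rw [one_div, cpow_inv_two_re, cpow_inv_two_im_eq_sqrt (by linarith)]
    refine Real.sqrt_lt_sqrt ?_ (by linarith)
    linarith [neg_le_of_abs_le (abs_re_le_norm x)]
  have hcos : Real.cos (π / 4) = Real.sin (π / 4) := by
    rw [Real.cos_pi_div_four, Real.sin_pi_div_four]
  rw [sqrtSlitNegImag, mul_re, exp_ofReal_mul_I_re, exp_ofReal_mul_I_im, hcos, ← mul_sub]
  exact mul_neg_of_pos_of_neg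
    (Real.sin_pos_of_pos_of_lt_pi (by positivity) (by linarith [Real.pi_pos])) (by linarith)

theorem sqrtSlitNegImag_eq_neg_cpow {w : ℂ} (hre : w.re < 0) (him : w.im < 0) :
    sqrtSlitNegImag w = -w ^ (1 / 2 : ℂ) := by
  refine (sq_eq_sq_iff_eq_or_eq_neg.mp ?_).resolve_left fun h => ?_
  · rw [sqrtSlitNegImag_sq, cpow_one_div_two_sq]
  · have := re_sqrtSlitNegImag_neg hre him
    rw [h] at this
    linarith [re_cpow_one_div_two_nonneg w]

theorem exists_local_sqrt {p : ℂ → ℂ} (hp : Differentiable ℂ p) {Q₀ : ℂ} (hQ₀ : Q₀ ≠ 0)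
    (hp₀ : p 0 = Q₀ ^ 2) :
    ∃ (U : Set ℂ) (Q : ℂ → ℂ), IsOpen U ∧ (0 : ℂ) ∈ U ∧ DifferentiableOn ℂ Q U ∧ Q 0 = Q₀ ∧
      (∀ z ∈ U, Q z ≠ 0) ∧ ∀ z ∈ U, Q z ^ 2 = p z := by
  have hsq (z : ℂ) : (Q₀ * (p z / Q₀ ^ 2) ^ (1 / 2 : ℂ)) ^ 2 = p z := by
    rw [mul_pow, cpow_one_div_two_sq]
    field_simp
  refine ⟨(fun z => p z / Q₀ ^ 2) ⁻¹' slitPlane, fun z => Q₀ * (p z / Q₀ ^ 2) ^ (1 / 2 : ℂ),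
    isOpen_slitPlane.preimage (hp.continuous.div_const _), by simp [hp₀, hQ₀], fun z hz => ?_,
    by simp [hp₀, hQ₀], fun z hz => ?_, fun z _ => hsq z⟩
  · exact (((hp z).div_const _).cpow_const hz).const_mul Q₀ |>.differentiableWithinAt
  · exact mul_ne_zero hQ₀ (cpow_ne_zero_iff.mpr (Or.inl (slitPlane_ne_zero hz)))

theorem exists_local_trajectory (Q₀ P₀ : ℂ) (hQ₀ : Q₀ ≠ 0) :
    ∃ (U : Set ℂ) (Q : ℂ → ℂ), IsOpen U ∧ (0 : ℂ) ∈ U ∧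
      DifferentiableOn ℂ Q U ∧ Q 0 = Q₀ ∧ deriv Q 0 = P₀ ∧
      (∀ z ∈ U, deriv (deriv Q) z = -1 / (4 * Q z ^ 3)) ∧
      (∀ z ∈ U, Q z ^ 2 = Q₀ ^ 2 + 2 * Q₀ * P₀ * z
        + 2 * (P₀ ^ 2 / 2 - 1 / (8 * Q₀ ^ 2)) * z ^ 2) := by
  obtain ⟨U, Q, hU, hU₀, hQ, hQQ₀, hQne, hsq⟩ := exists_local_sqrt
    (p := fun z => Q₀ ^ 2 + 2 * Q₀ * P₀ * z + 2 * (P₀ ^ 2 / 2 - 1 / (8 * Q₀ ^ 2)) * z ^ 2)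
    (by fun_prop) hQ₀ (by simp)
  refine ⟨U, Q, hU, hU₀, hQ, hQQ₀, ?_,
    fun z hz => deriv_deriv_eq_of_sq_eq_quadratic hU hQ hQne hsq ?_ hz, hsq⟩
  · rw [deriv_eq_div_of_sq_eq_quadratic hU hQ hsq hU₀ (hQne 0 hU₀), hQQ₀]
    field_simp
    ring
  · field_simp
    ring

theorem trajectory_of_sqrt_comp_add_one {S : ℂ → ℂ} {V : Set ℂ} (hV : IsOpen V)
    (hV₁ : (1 : ℂ) ∈ V) (hV₀ : (0 : ℂ) ∉ V) (hS : DifferentiableOn ℂ S V)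
    (hsq : ∀ w, S w ^ 2 = w) (hS₁ : S 1 = 1) :
    DifferentiableOn ℂ (fun z => S (z + 1)) ((· + 1) ⁻¹' V) ∧
      (∀ z ∈ (· + 1) ⁻¹' V, S (z + 1) ^ 2 = z + 1) ∧ S (0 + 1) = 1 ∧
      deriv (fun z => S (z + 1)) 0 = 1 / 2 ∧
      ∀ z ∈ (· + 1) ⁻¹' V, deriv (deriv fun z => S (z + 1)) z = -1 / (4 * S (z + 1) ^ 3) := by
  have hU : IsOpen ((· + 1) ⁻¹' V) := hV.preimage (by fun_prop)
  have hQ : DifferentiableOn ℂ (fun z => S (z + 1)) ((· + 1) ⁻¹' V) :=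
    hS.comp (by fun_prop) fun _ hz => hz
  have hsq' : ∀ z ∈ (· + 1) ⁻¹' V, S (z + 1) ^ 2 = 1 + 1 * z + 0 * z ^ 2 := fun z _ => by
    rw [hsq]; ring
  have hne : ∀ z ∈ (· + 1) ⁻¹' V, S (z + 1) ≠ 0 := fun z hz hSz => by
    have h := hsq (z + 1)
    rw [hSz, zero_pow two_ne_zero] at h
    exact hV₀ (by rw [h]; exact hz)
  have hU₀ : (0 : ℂ) ∈ (· + 1) ⁻¹' V := by simpa using hV₁
  refine ⟨hQ, fun z _ => hsq _, by rw [zero_add, hS₁], ?_,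
    fun z hz => deriv_deriv_eq_of_sq_eq_quadratic hU hQ hne hsq' (by norm_num) hz⟩
  rw [deriv_eq_div_of_sq_eq_quadratic hU hQ hsq' hU₀ (hne 0 hU₀), zero_add, hS₁]
  norm_num

/-- For the holomorphic ODE `Q'' = -1/(4Q³)` with `Q(0) = Q₀ ≠ 0`,
`Q'(0) = P₀`, locally `Q(z)² = Q₀² + 2Q₀P₀·z + 2E₀·z²` with
`E₀ = P₀²/2 - 1/(8Q₀²)` (the square root branch with `√(Q₀²) = Q₀`).
For `Q₀ = 1`, `P₀ = 1/2` one has `E₀ = 0` and `Q(z) = √(z+1)`; the two maximal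
holomorphic extensions `Q₁` (principal branch, on the plane slit along
`{Re(z+1) ≤ 0, Im(z+1) = 0}`) and `Q₂` (branch on the plane slit along
`{Im(z+1) ≤ 0, Re(z+1) = 0}`) have different domains and satisfy `Q₂ = -Q₁` on
the third quadrant `{Re(z+1) < 0, Im(z+1) < 0}`: maximal holomorphic trajectories
with the same initial value need not be unique. -/
theorem stmt_16 :
    (∀ Q₀ P₀ : ℂ, Q₀ ≠ 0 → ∃ (U : Set ℂ) (Q : ℂ → ℂ), IsOpen U ∧ (0 : ℂ) ∈ U ∧
      DifferentiableOn ℂ Q U ∧ Q 0 = Q₀ ∧ deriv Q 0 = P₀ ∧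
      (∀ z ∈ U, deriv (deriv Q) z = -1 / (4 * Q z ^ 3)) ∧
      (∀ z ∈ U, Q z ^ 2 = Q₀ ^ 2 + 2 * Q₀ * P₀ * z
        + 2 * (P₀ ^ 2 / 2 - 1 / (8 * Q₀ ^ 2)) * z ^ 2)) ∧
    (let U₁ : Set ℂ := {z | 0 < (z + 1).re ∨ (z + 1).im ≠ 0}
     let U₂ : Set ℂ := {z | (z + 1).re ≠ 0 ∨ 0 < (z + 1).im}
     let Q₁ : ℂ → ℂ := fun z => (z + 1) ^ ((1 : ℂ) / 2)
     DifferentiableOn ℂ Q₁ U₁ ∧ (∀ z ∈ U₁, Q₁ z ^ 2 = z + 1) ∧ Q₁ 0 = 1 ∧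
     deriv Q₁ 0 = 1 / 2 ∧
     (∀ z ∈ U₁, deriv (deriv Q₁) z = -1 / (4 * Q₁ z ^ 3)) ∧
     U₁ ≠ U₂ ∧
     ∃ Q₂ : ℂ → ℂ, DifferentiableOn ℂ Q₂ U₂ ∧ (∀ z ∈ U₂, Q₂ z ^ 2 = z + 1) ∧
       Q₂ 0 = 1 ∧ deriv Q₂ 0 = 1 / 2 ∧
       (∀ z ∈ U₂, deriv (deriv Q₂) z = -1 / (4 * Q₂ z ^ 3)) ∧
       (∀ z : ℂ, (z + 1).re < 0 → (z + 1).im < 0 → Q₂ z = -Q₁ z)) := by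
  refine ⟨exists_local_trajectory, ?_⟩
  intro U₁ U₂ Q₁
  obtain ⟨hQ₁, hQ₁sq, hQ₁₀, hQ₁', hQ₁''⟩ := trajectory_of_sqrt_comp_add_one isOpen_slitPlane
    one_mem_slitPlane zero_notMem_slitPlane differentiableOn_cpow_one_div_two cpow_one_div_two_sq
    (one_cpow _)
  obtain ⟨hQ₂, hQ₂sq, hQ₂₀, hQ₂', hQ₂''⟩ := trajectory_of_sqrt_comp_add_one
    (isOpen_slitPlane.preimage (continuous_const_mul (-I))) (by simp [mem_slitPlane_iff]) (by simp)
    differentiableOn_sqrtSlitNegImag sqrtSlitNegImag_sq sqrtSlitNegImag_one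
  have hU₂ : U₂ = (· + 1) ⁻¹' ((-I * ·) ⁻¹' slitPlane) :=
    Set.ext fun _ => neg_I_mul_mem_slitPlane_iff.symm
  have hU₁₂ : (-2 : ℂ) ∈ U₂ \ U₁ := by norm_num [U₁, U₂]
  rw [hU₂] at hU₁₂ ⊢
  exact ⟨hQ₁, hQ₁sq, hQ₁₀, hQ₁', hQ₁'', fun h => hU₁₂.2 (h ▸ hU₁₂.1), _, hQ₂, hQ₂sq, hQ₂₀, hQ₂',
    hQ₂'', fun z hre him => sqrtSlitNegImag_eq_neg_cpow hre him⟩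
end
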